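/- Suppose x, y in (0,1), and normalized confusion matrices for two groups satisfy demographic parity (TPa+FPa = TPb+FPb), predictive equality (FNa·TNb = FNb·TNa), and treatment equality (FNa·FPb = FNb·FPa), with FNb > 0 and FPb > 0 and all entries nonnegative. Then x = y. -/
import Mathlib


theorem stmt
    (x y TPa FNa TNa FPa TPb FNb TNb FPb : ℝ)
    (hx0 : 0 < x) (hx1 : x < 1) (hy0 : 0 < y) (hy1 : y < 1)
    (hTPa : 0 ≤ TPa) (hFNa : 0 ≤ FNa) (hTNa : 0 ≤ TNa) (hFPa : 0 ≤ FPa)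
    (hTPb : 0 ≤ TPb) (hFNb : 0 ≤ FNb) (hTNb : 0 ≤ TNb) (hFPb : 0 ≤ FPb)
    (hra : TPa + FNa = 1 - x) (hra' : TNa + FPa = x)
    (hrb : TPb + FNb = 1 - y) (hrb' : TNb + FPb = y)
    (hdp : TPa + FPa = TPb + FPb)
    (hpe : FNa * TNb = FNb * TNa)
    (hte : FNa * FPb = FNb * FPa)
    (hFNbpos : 0 < FNb)
    (hFPbpos : 0 < FPb)
    : x = y := by
  have h1 : FNa * y = FNb * x := by
    linear_combination hpe + hte - FNa * hrb' + FNb * hra'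
  have key : (FNb - FNa) * (y + FNb - FPb) = 0 := by
    linear_combination FNb * (hrb - hra + hdp) - h1 + hte
  rcases mul_eq_zero.1 key with h | h
  · have hfe : FNa = FNb := by linarith
    have : FNb * y = FNb * x := by rw [← hfe] at h1 ⊢; exact h1
    exact (mul_left_cancel₀ (ne_of_gt hFNbpos) this).symm
  · linarith
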